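/- Let m < k be positive integers and x_1, …, x_k ∈ ℝ^m. Suppose the polytope P = {λ ∈ ℝ^k : ∑_{i=1}^k λ_i x_i = 0, ∑_{i=1}^k λ_i = k − 1 − m, and 0 ≤ λ_i ≤ 1 for all i} is nonempty. Then P contains a point λ with λ_i = 0 for at least one index i. -/

import Mathlib

/-!
The polytope is compact, so by Krein–Milman it has an extreme point `λ`. At most `m + 1`
coordinates of `λ` lie in `(0, 1)`: otherwise some nonzero `v` supported on them satisfies
`∑ vᵢ xᵢ = 0` and `∑ vᵢ = 0`, and `λ ± t v` stay in the polytope for small `t`. If no coordinate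
of `λ` vanished, all the other coordinates would be `1`, so `∑ (1 - λᵢ) < m + 1`, whereas the
constraint on `∑ λᵢ` says `∑ (1 - λᵢ) = m + 1`.
-/
open Finset Filter Topology

section
variable {ι E : Type*} [Fintype ι] [AddCommGroup E] [Module ℝ E]

def steinitzPolytope (x : ι → E) (c : ℝ) : Set (ι → ℝ) :=
  {lam | (∑ i, lam i • x i) = 0 ∧ (∑ i, lam i) = c ∧ ∀ i, 0 ≤ lam i ∧ lam i ≤ 1}

theorem exists_relation_sum_eq_zero_supported_of_finrank_succ_lt_card [FiniteDimensional ℝ E]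
    (x : ι → E) {S : Finset ι} (hS : Module.finrank ℝ E + 1 < #S) :
    ∃ v : ι → ℝ, v ≠ 0 ∧ (∀ i ∉ S, v i = 0) ∧ (∑ i, v i • x i) = 0 ∧ ∑ i, v i = 0 := by
  let L : (ι → ℝ) →ₗ[ℝ] E × ℝ :=
    (Fintype.linearCombination ℝ x).prod (Fintype.linearCombination ℝ fun _ ↦ 1)
  let extend : (S → ℝ) →ₗ[ℝ] ι → ℝ := Function.ExtendByZero.linearMap ℝ Subtype.val
  have hker : LinearMap.ker (L ∘ₗ extend) ≠ ⊥ := LinearMap.ker_ne_bot_of_finrank_lt <| by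
    simpa [Module.finrank_prod] using hS
  obtain ⟨w, hwL, hw⟩ := (Submodule.ne_bot_iff _).mp hker
  refine ⟨extend w, ?_, fun i hi ↦ ?_, ?_⟩
  · have hinj : Function.Injective extend :=
      Function.extend_injective Subtype.val_injective (0 : ι → ℝ)
    exact fun h ↦ hw <| (injective_iff_map_eq_zero extend).mp hinj w h
  · exact Function.extend_apply' _ _ _ fun ⟨j, hj⟩ ↦ hi (hj ▸ j.2)
  · simpa [L, Fintype.linearCombination_apply] using hwL

theorem exists_eq_zero_of_sum_eq_card_sub (lam : ι → ℝ) (n : ℕ) (hnonneg : ∀ i, 0 ≤ lam i)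
    (hsum : ∑ i, lam i = Fintype.card ι - 1 - n) (hfrac : #{i | lam i ∈ Set.Ioo 0 1} ≤ n + 1) :
    ∃ i, lam i = 0 := by
  by_contra! hne
  have hpos i : 0 < lam i := (hnonneg i).lt_of_ne' (hne i)
  set F : Finset ι := {i | lam i ∈ Set.Ioo 0 1}
  have hdefect : ∑ i, (1 - lam i) = n + 1 := by
    rw [sum_sub_distrib, hsum]
    simp only [sum_const, card_univ, nsmul_eq_mul, mul_one]
    ring
  have hout : ∑ i ∈ univ.filter (fun i ↦ lam i ∉ Set.Ioo 0 1), (1 - lam i) ≤ 0 :=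
    sum_nonpos fun i hi ↦ by
      simp only [mem_filter, Set.mem_Ioo, not_and, not_lt] at hi
      linarith [hi.2 (hpos i)]
  have hin : ∑ i ∈ F, (1 - lam i) < n + 1 := by
    rcases F.eq_empty_or_nonempty with hF | hF
    · simp only [hF, sum_empty]; positivity
    calc ∑ i ∈ F, (1 - lam i) < ∑ i ∈ F, 1 :=
          sum_lt_sum_of_nonempty hF fun i _ ↦ by linarith [hpos i]
      _ = #F := by simp
      _ ≤ n + 1 := by exact_mod_cast hfrac
  linarith [sum_filter_add_sum_filter_not univ (fun i ↦ lam i ∈ Set.Ioo 0 1) (1 - lam ·)]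

theorem isCompact_steinitzPolytope (x : ι → E) (c : ℝ) : IsCompact (steinitzPolytope x c) := by
  have hP : steinitzPolytope x c =
      (LinearMap.ker (Fintype.linearCombination ℝ x) : Set (ι → ℝ)) ∩
        {lam | ∑ i, lam i = c} ∩ Set.Icc 0 1 := by
    ext lam
    simp [steinitzPolytope, Fintype.linearCombination_apply, Pi.le_def, forall_and, and_assoc]
  rw [hP]
  exact isCompact_Icc.inter_left <| Submodule.closed_of_finiteDimensional _ |>.inter <|
    isClosed_eq (by fun_prop) continuous_const

theorem card_fractional_le_of_mem_extremePoints [FiniteDimensional ℝ E] {x : ι → E} {c : ℝ}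
    {lam : ι → ℝ} (hlam : lam ∈ (steinitzPolytope x c).extremePoints ℝ) :
    #{i | lam i ∈ Set.Ioo 0 1} ≤ Module.finrank ℝ E + 1 := by
  by_contra! hcard
  obtain ⟨v, hv0, hvS, hvx, hvsum⟩ :=
    exists_relation_sum_eq_zero_supported_of_finrank_succ_lt_card x hcard
  obtain ⟨hx, hsum, hbox⟩ := hlam.1
  have hmove : ∀ᶠ t in 𝓝 (0 : ℝ), lam + t • v ∈ steinitzPolytope x c := by
    have hbox' : ∀ᶠ t in 𝓝 (0 : ℝ), ∀ i, 0 ≤ lam i + t * v i ∧ lam i + t * v i ≤ 1 := by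
      refine eventually_all.2 fun i ↦ ?_
      by_cases hi : lam i ∈ Set.Ioo 0 1
      · have hlim : Tendsto (fun t : ℝ ↦ lam i + t * v i) (𝓝 0) (𝓝 (lam i)) := by
          simpa using ((continuous_id.mul continuous_const).const_add (lam i)).tendsto (0 : ℝ)
        exact (hlim.eventually (Ioo_mem_nhds hi.1 hi.2)).mono fun t ht ↦ ⟨ht.1.le, ht.2.le⟩
      · simp [hvS i (by simpa using hi), hbox i]
    refine hbox'.mono fun t ht ↦ ⟨?_, ?_, by simpa using ht⟩
    · simp [add_smul, sum_add_distrib, hx, mul_smul, ← smul_sum, hvx]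
    · simp [sum_add_distrib, hsum, ← mul_sum, hvsum]
  obtain ⟨t, ht, hplus, hminus⟩ :=
    (hmove.and ((continuous_neg.tendsto' 0 0 neg_zero).eventually hmove)).exists_gt
  have hseg : lam ∈ openSegment ℝ (lam + t • v) (lam + (-t) • v) :=
    ⟨1 / 2, 1 / 2, by norm_num, by norm_num, by norm_num, by module⟩
  have hzero : t • v = 0 := by simpa using hlam.2 hplus hminus hseg
  exact smul_ne_zero ht.ne' hv0 hzero

end

theorem steinitz_pruning_step_general
    (m k : ℕ)
    (x : Fin k → Fin m → ℝ)
    (P : Set (Fin k → ℝ))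
    (hP : P = {lam : Fin k → ℝ |
      (∑ i, lam i • x i) = 0 ∧
      (∑ i, lam i) = (k : ℝ) - 1 - (m : ℝ) ∧
      ∀ i, 0 ≤ lam i ∧ lam i ≤ 1})
    (hne : P.Nonempty) :
    ∃ lam ∈ P, ∃ i : Fin k, lam i = 0 := by
  change P = steinitzPolytope x _ at hP
  subst hP
  obtain ⟨lam, hlam⟩ := (isCompact_steinitzPolytope x _).extremePoints_nonempty hne
  have hfrac := card_fractional_le_of_mem_extremePoints hlam
  rw [Module.finrank_fin_fun] at hfrac
  have hsum : ∑ i, lam i = Fintype.card (Fin k) - 1 - m := by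
    rw [Fintype.card_fin]; exact hlam.1.2.1
  exact ⟨lam, hlam.1,
    exists_eq_zero_of_sum_eq_card_sub lam m (fun i ↦ (hlam.1.2.2 i).1) hsum hfrac⟩

/-- The pruning step of the LP-based proof of the Steinitz lemma: if the polytope
`P = {λ ∈ ℝ^k : ∑ λ_i x_i = 0, ∑ λ_i = k − 1 − m, 0 ≤ λ ≤ 1}` is nonempty,
then it contains a point with some coordinate equal to `0`. -/
theorem steinitz_pruning_step
    (m k : ℕ) (hm : 0 < m) (hmk : m < k)
    (x : Fin k → Fin m → ℝ)
    (P : Set (Fin k → ℝ))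
    (hP : P = {lam : Fin k → ℝ |
      (∑ i, lam i • x i) = 0 ∧
      (∑ i, lam i) = (k : ℝ) - 1 - (m : ℝ) ∧
      ∀ i, 0 ≤ lam i ∧ lam i ≤ 1})
    (hne : P.Nonempty) :
    ∃ lam ∈ P, ∃ i : Fin k, lam i = 0 :=
  steinitz_pruning_step_general m k x P hP hne
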